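/- In a restriction category with restriction coproducts and a restriction zero, a morphism h : A → A + A is the decision of f : A → B + C if and only if ∇ ∘ h = f̄ and (f + f) ∘ h = (i + j) ∘ f, where i, j : B+C → (B+C)+(B+C) are composed appropriately, i.e. the square with h and the injections commutes. -/

import Mathlib

open CategoryTheory CategoryTheory.Limits

universe v u

/-- A restriction category: a category with an operation assigning to each
morphism `f : A ⟶ B` a morphism `ρ f : A ⟶ A` satisfying axioms R.1–R.4.
(Composition is written diagrammatically: `f ≫ g` is "first `f`, then `g`",
so the paper's `g ∘ f` is `f ≫ g`.) -/
class RestrictionCategory (C : Type u) [Category.{v} C] where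
  ρ : ∀ {A B : C}, (A ⟶ B) → (A ⟶ A)
  R1 : ∀ {A B : C} (f : A ⟶ B), ρ f ≫ f = f
  R2 : ∀ {A B D : C} (f : A ⟶ B) (g : A ⟶ D), ρ f ≫ ρ g = ρ g ≫ ρ f
  R3 : ∀ {A B D : C} (f : A ⟶ B) (g : A ⟶ D), ρ (ρ f ≫ g) = ρ f ≫ ρ g
  R4 : ∀ {A B D : C} (f : A ⟶ B) (g : B ⟶ D), f ≫ ρ g = ρ (f ≫ g) ≫ f

open RestrictionCategory

open ZeroObject

variable {C : Type u} [Category.{v} C] [RestrictionCategory C]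
  [HasBinaryCoproducts C] [HasZeroObject C] [HasZeroMorphisms C]

/-- The restriction retraction `⟨1|0⟩ : A ⨿ B ⟶ A` of the first injection. -/
noncomputable def iStar (A B : C) : (A ⨿ B) ⟶ A := coprod.desc (𝟙 A) 0

/-- The restriction retraction `⟨0|1⟩ : A ⨿ B ⟶ B` of the second injection. -/
noncomputable def jStar (A B : C) : (A ⨿ B) ⟶ B := coprod.desc 0 (𝟙 B)

/-- `h : A ⟶ A ⨿ A` is a decision for `f : A ⟶ B ⨿ D` if it is restriction
inverse to `⟨overline{i* f} | overline{j* f}⟩ : A ⨿ A ⟶ A` and `ρ h = ρ f`. -/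
def IsDecision {A B D : C} (f : A ⟶ B ⨿ D) (h : A ⟶ A ⨿ A) : Prop :=
  coprod.desc (ρ (f ≫ iStar B D)) (ρ (f ≫ jStar B D)) ≫ h =
    ρ (coprod.desc (ρ (f ≫ iStar B D)) (ρ (f ≫ jStar B D))) ∧
  h ≫ coprod.desc (ρ (f ≫ iStar B D)) (ρ (f ≫ jStar B D)) = ρ h ∧
  ρ h = ρ f

/-! Write `a = ρ (f ≫ i*)` and `b = ρ (f ≫ j*)`. By R.4, `a ≫ f = f ≫ ρ i*` and
`b ≫ f = f ≫ ρ j*`: on `a` the map `f` lands in `B`, on `b` in `D`, so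
`a ≫ f + b ≫ f = ⟨a|b⟩ ≫ f ≫ (i + j)`. A decision satisfies `h ≫ (a + b) = h` and
`h ≫ ⟨a|b⟩ = ρ f`, which gives both equations. Conversely, the square yields
`h ≫ (f ≫ i* + f ≫ j*) = f`, hence `h ≫ (a + b) = h` because the injections are total, and
`h ≫ ⟨f ≫ i*|0⟩ = f ≫ i*`, which by R.4 forces `a ≫ h = a ≫ coprod.inl`; symmetrically
for `b`. -/

section Coproducts

variable {C : Type u} [Category.{v} C] [HasBinaryCoproducts C]

lemma comp_coprod_desc_of_comp_map {A B D X : C} {f : A ⟶ B ⨿ D} {h : A ⟶ A ⨿ A}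
    (hsq : h ≫ coprod.map f f = f ≫ coprod.map coprod.inl coprod.inr) (p q : B ⨿ D ⟶ X) :
    h ≫ coprod.desc (f ≫ p) (f ≫ q) = f ≫ coprod.desc (coprod.inl ≫ p) (coprod.inr ≫ q) := by
  rw [← coprod.map_desc, reassoc_of% hsq, coprod.map_desc]

variable [HasZeroMorphisms C]

@[simp]
lemma inl_iStar (A B : C) : coprod.inl ≫ iStar A B = 𝟙 A := by
  simp [iStar, coprod.inl_desc]

@[simp]
lemma inr_iStar (A B : C) : coprod.inr ≫ iStar A B = 0 := by
  simp [iStar, coprod.inr_desc]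

@[simp]
lemma inl_jStar (A B : C) : coprod.inl ≫ jStar A B = 0 := by
  simp [jStar, coprod.inl_desc]

@[simp]
lemma inr_jStar (A B : C) : coprod.inr ≫ jStar A B = 𝟙 B := by
  simp [jStar, coprod.inr_desc]

end Coproducts

namespace RestrictionCategory

section

variable {C : Type u} [Category.{v} C] [RestrictionCategory C]

@[simp]
lemma rho_id (A : C) : ρ (𝟙 A) = 𝟙 A := by
  simpa using R1 (𝟙 A)

@[simp]
lemma rho_rho {A B : C} (f : A ⟶ B) : ρ (ρ f) = ρ f := by
  simpa using R3 f (𝟙 A)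

lemma rho_comp_comp_rho_self {A B X : C} (f : A ⟶ B) (g : B ⟶ X) :
    ρ (f ≫ g) ≫ ρ f = ρ (f ≫ g) := by
  rw [R2, ← R3, ← Category.assoc, R1]

lemma rho_comp_rho {A B X : C} (f : A ⟶ B) (g : B ⟶ X) : ρ (f ≫ ρ g) = ρ (f ≫ g) := by
  rw [R4, R3, rho_comp_comp_rho_self]

lemma rho_comp_of_rho_eq_id {A B X : C} (f : A ⟶ B) {g : B ⟶ X} (hg : ρ g = 𝟙 B) :
    ρ (f ≫ g) = ρ f := by
  rw [← rho_comp_rho, hg, Category.comp_id]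

lemma comp_rho_eq_self {A B X : C} {f : A ⟶ B} {g : B ⟶ X} (h : ρ (f ≫ g) = ρ f) :
    f ≫ ρ g = f := by
  rw [R4, h, R1]

lemma rho_zero [HasZeroMorphisms C] {X : C} (hzero : ρ (0 : X ⟶ X) = 0) (Y : C) :
    ρ (0 : X ⟶ Y) = 0 := by
  calc ρ (0 : X ⟶ Y) = ρ ((0 : X ⟶ X) ≫ ρ (0 : X ⟶ Y)) := by
        rw [rho_comp_rho, zero_comp]
    _ = 0 := by rw [zero_comp, hzero]

variable [HasBinaryCoproducts C]

lemma rho_coprod_desc {X Y Z : C} (p : X ⟶ Z) (q : Y ⟶ Z) :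
    ρ (coprod.desc p q) = coprod.map (ρ p) (ρ q) := by
  ext <;> rw [R4] <;> simp [coprod.inl_desc, coprod.inr_desc]

lemma rho_coprod_map {X Y X' Y' : C} (hinl : ρ (coprod.inl : X' ⟶ X' ⨿ Y') = 𝟙 X')
    (hinr : ρ (coprod.inr : Y' ⟶ X' ⨿ Y') = 𝟙 Y') (p : X ⟶ X') (q : Y ⟶ Y') :
    ρ (coprod.map p q) = coprod.map (ρ p) (ρ q) := by
  ext <;> rw [R4] <;> simp [rho_comp_of_rho_eq_id, hinl, hinr]

lemma rho_codiag (A : C) : ρ (coprod.desc (𝟙 A) (𝟙 A)) = 𝟙 (A ⨿ A) := by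
  simp [rho_coprod_desc]

lemma rho_eq_of_comp_codiag_eq_rho {A Y : C} {h : A ⟶ A ⨿ A} {g : A ⟶ Y}
    (hcod : h ≫ coprod.desc (𝟙 A) (𝟙 A) = ρ g) : ρ h = ρ g := by
  rw [← rho_comp_of_rho_eq_id h (rho_codiag A), hcod, rho_rho]

variable [HasZeroMorphisms C]

lemma rho_iStar {A B : C} (hzero : ρ (0 : B ⟶ B) = 0) :
    ρ (iStar A B) = coprod.map (𝟙 A) 0 := by
  rw [iStar, rho_coprod_desc, rho_id, rho_zero hzero]

lemma rho_jStar {A B : C} (hzero : ρ (0 : A ⟶ A) = 0) :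
    ρ (jStar A B) = coprod.map 0 (𝟙 B) := by
  rw [jStar, rho_coprod_desc, rho_id, rho_zero hzero]

lemma coprod_map_rho_comp_eq_desc_comp {A B D : C} (hzeroB : ρ (0 : B ⟶ B) = 0)
    (hzeroD : ρ (0 : D ⟶ D) = 0) (f : A ⟶ B ⨿ D) :
    coprod.map (ρ (f ≫ iStar B D) ≫ f) (ρ (f ≫ jStar B D) ≫ f) =
      coprod.desc (ρ (f ≫ iStar B D)) (ρ (f ≫ jStar B D)) ≫ f ≫
        coprod.map coprod.inl coprod.inr := by
  have hi : ρ (f ≫ iStar B D) ≫ f = f ≫ coprod.map (𝟙 B) 0 := by rw [← R4, rho_iStar hzeroD]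
  have hj : ρ (f ≫ jStar B D) ≫ f = f ≫ coprod.map 0 (𝟙 D) := by rw [← R4, rho_jStar hzeroB]
  ext
  · simp only [coprod.inl_map, coprod.inl_desc_assoc, Category.assoc, reassoc_of% hi]
    congr 1
    ext <;> simp
  · simp only [coprod.inr_map, coprod.inr_desc_assoc, Category.assoc, reassoc_of% hj]
    congr 1
    ext <;> simp

lemma rho_comp_eq_rho_comp_inl {A Y : C} (hzero : ρ (0 : A ⟶ A) = 0) {h : A ⟶ A ⨿ A}
    {g : A ⟶ Y} (hg : h ≫ coprod.desc g 0 = g)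
    (hcod : ρ g ≫ h ≫ coprod.desc (𝟙 A) (𝟙 A) = ρ g) :
    ρ g ≫ h = ρ g ≫ coprod.inl := by
  have hcomm : ρ g ≫ h = h ≫ coprod.map (ρ g) 0 := by
    rw [← rho_zero hzero Y, ← rho_coprod_desc, R4, hg]
  have hproj : coprod.map (ρ g) 0 ≫ coprod.desc (𝟙 A) (𝟙 A) ≫ coprod.inl =
      coprod.map (ρ g) (0 : A ⟶ A) := by
    ext <;> simp [coprod.inl_desc, coprod.inr_desc]
  calc ρ g ≫ h = h ≫ coprod.map (ρ g) 0 ≫ coprod.desc (𝟙 A) (𝟙 A) ≫ coprod.inl := by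
        rw [hproj, hcomm]
    _ = ρ g ≫ coprod.inl := by rw [← reassoc_of% hcomm, reassoc_of% hcod]

lemma rho_comp_eq_rho_comp_inr {A Y : C} (hzero : ρ (0 : A ⟶ A) = 0) {h : A ⟶ A ⨿ A}
    {g : A ⟶ Y} (hg : h ≫ coprod.desc 0 g = g)
    (hcod : ρ g ≫ h ≫ coprod.desc (𝟙 A) (𝟙 A) = ρ g) :
    ρ g ≫ h = ρ g ≫ coprod.inr := by
  have hcomm : ρ g ≫ h = h ≫ coprod.map 0 (ρ g) := by
    rw [← rho_zero hzero Y, ← rho_coprod_desc, R4, hg]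
  have hproj : coprod.map 0 (ρ g) ≫ coprod.desc (𝟙 A) (𝟙 A) ≫ coprod.inr =
      coprod.map (0 : A ⟶ A) (ρ g) := by
    ext <;> simp [coprod.inl_desc, coprod.inr_desc]
  calc ρ g ≫ h = h ≫ coprod.map 0 (ρ g) ≫ coprod.desc (𝟙 A) (𝟙 A) ≫ coprod.inr := by
        rw [hproj, hcomm]
    _ = ρ g ≫ coprod.inr := by rw [← reassoc_of% hcomm, reassoc_of% hcod]

theorem isDecision_of_comp_codiag_of_comp_map {A B D : C} {f : A ⟶ B ⨿ D} {h : A ⟶ A ⨿ A}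
    (hinl : ρ (coprod.inl : B ⟶ B ⨿ D) = 𝟙 B) (hinr : ρ (coprod.inr : D ⟶ B ⨿ D) = 𝟙 D)
    (hzero : ρ (0 : A ⟶ A) = 0) (hcod : h ≫ coprod.desc (𝟙 A) (𝟙 A) = ρ f)
    (hsq : h ≫ coprod.map f f = f ≫ coprod.map coprod.inl coprod.inr) :
    IsDecision f h := by
  have hρ : ρ h = ρ f := rho_eq_of_comp_codiag_eq_rho hcod
  have hsplit : h ≫ coprod.map (f ≫ iStar B D) (f ≫ jStar B D) = f := by
    rw [← coprod.map_map, reassoc_of% hsq, coprod.map_map]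
    simp
  have hproj : h ≫ coprod.map (ρ (f ≫ iStar B D)) (ρ (f ≫ jStar B D)) = h := by
    rw [← rho_coprod_map hinl hinr]
    exact comp_rho_eq_self (by rw [hsplit, hρ])
  have hcod' : ∀ {Y : C} (g : B ⨿ D ⟶ Y),
      ρ (f ≫ g) ≫ h ≫ coprod.desc (𝟙 A) (𝟙 A) = ρ (f ≫ g) := fun g => by
    rw [hcod, rho_comp_comp_rho_self]
  have hfst : h ≫ coprod.desc (f ≫ iStar B D) 0 = f ≫ iStar B D := by
    simpa [iStar, coprod.inl_desc] using comp_coprod_desc_of_comp_map hsq (iStar B D) 0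
  have hsnd : h ≫ coprod.desc 0 (f ≫ jStar B D) = f ≫ jStar B D := by
    simpa [jStar, coprod.inr_desc] using comp_coprod_desc_of_comp_map hsq 0 (jStar B D)
  refine ⟨?_, ?_, hρ⟩
  · rw [rho_coprod_desc, rho_rho, rho_rho]
    ext
    · rw [coprod.inl_desc_assoc, coprod.inl_map]
      exact rho_comp_eq_rho_comp_inl hzero hfst (hcod' _)
    · rw [coprod.inr_desc_assoc, coprod.inr_map]
      exact rho_comp_eq_rho_comp_inr hzero hsnd (hcod' _)
  · calc _ = (h ≫ coprod.map (ρ (f ≫ iStar B D)) (ρ (f ≫ jStar B D))) ≫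
            coprod.desc (𝟙 A) (𝟙 A) := by simp
      _ = ρ h := by rw [hproj, hcod, hρ]

end

end RestrictionCategory

namespace IsDecision

variable {C : Type u} [Category.{v} C] [RestrictionCategory C] [HasBinaryCoproducts C]
  [HasZeroMorphisms C] {A B D : C} {f : A ⟶ B ⨿ D} {h : A ⟶ A ⨿ A}

lemma comp_coprod_map_rho_eq_self (hd : IsDecision f h) :
    h ≫ coprod.map (ρ (f ≫ iStar B D)) (ρ (f ≫ jStar B D)) = h := by
  rw [← rho_rho (f ≫ iStar B D), ← rho_rho (f ≫ jStar B D), ← rho_coprod_desc]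
  exact comp_rho_eq_self (by rw [hd.2.1, rho_rho])

lemma comp_codiag (hd : IsDecision f h) : h ≫ coprod.desc (𝟙 A) (𝟙 A) = ρ f := by
  rw [← hd.comp_coprod_map_rho_eq_self, Category.assoc, coprod.map_desc]
  simp only [Category.comp_id]
  exact hd.2.1.trans hd.2.2

lemma comp_coprod_map (hzeroB : ρ (0 : B ⟶ B) = 0) (hzeroD : ρ (0 : D ⟶ D) = 0)
    (hd : IsDecision f h) :
    h ≫ coprod.map f f = f ≫ coprod.map coprod.inl coprod.inr := by
  rw [← hd.comp_coprod_map_rho_eq_self, Category.assoc, coprod.map_map,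
    coprod_map_rho_comp_eq_desc_comp hzeroB hzeroD, reassoc_of% hd.2.1, hd.2.2,
    ← Category.assoc, R1]

end IsDecision

/-- Characterization of decisions: in a restriction category with restriction
coproducts (total injections) and restriction zero, `h : A ⟶ A ⨿ A` is the
decision of `f : A ⟶ B ⨿ D` if and only if `∇ ∘ h = ρ f` and
`(f + f) ∘ h = (i + j) ∘ f`. -/
theorem stmt_10
    (htot : ∀ A B : C, ρ (coprod.inl : A ⟶ A ⨿ B) = 𝟙 A ∧
      ρ (coprod.inr : B ⟶ A ⨿ B) = 𝟙 B)
    (hzero : ∀ A : C, ρ (0 : A ⟶ A) = (0 : A ⟶ A))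
    {A B D : C} (f : A ⟶ B ⨿ D) (h : A ⟶ A ⨿ A) :
    IsDecision f h ↔
      (h ≫ coprod.desc (𝟙 A) (𝟙 A) = ρ f ∧
       h ≫ coprod.map f f =
         f ≫ coprod.map (coprod.inl : B ⟶ B ⨿ D) (coprod.inr : D ⟶ B ⨿ D)) :=
  ⟨fun hd => ⟨hd.comp_codiag, hd.comp_coprod_map (hzero B) (hzero D)⟩,
    fun ⟨hcod, hsq⟩ =>
      isDecision_of_comp_codiag_of_comp_map (htot B D).1 (htot B D).2 (hzero A) hcod hsq⟩
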